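/- arXiv:2102.12099 — 2 statements merged into one kernel-verified Lean document; each statement's English description precedes it below -/
import Mathlib

section
/- Suppose R : X → PMF(Y) is a deletion (ε, δ)-DP local randomizer with reference distribution ρ, t-samplable via R_∅ : {0,1}^t → Y, and G : {0,1}^ℓ → {0,1}^t β-fools the density tests of R for some β ≥ 0. Define the truncated density ratio π̃_x(y) := min(R(x)(y), e^ε·ρ(y))/ρ(y) on the range of R_∅. Then for every x ∈ X: (i) 1 − δ − e^ε·β ≤ E_{s ~ Uniform({0,1}^ℓ)}[π̃_x(R_∅(G(s)))] ≤ 1 + e^ε·β, and (ii) E_{s ~ Uniform({0,1}^ℓ)}[max(1 − e^ε·π̃_x(R_∅(G(s))), 0)] ≤ δ + β. -/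
/-!
Layer-cake formula: for `W ≥ 0` and a level `a ≥ 0`, `E[min W a] = ∫₀ᵃ Pr[θ ≤ W] dθ`. Applied to the
density ratio `π_x`, whose tests `Pr[θ ≤ π_x]` with `θ ∈ [0, e^ε]` are fooled up to `β`, this moves
`E[min π_x a]` by at most `a β` when the true seed is replaced by `G s`. Under the true seed,
`E[min π_x a] = Σ_y min(R(x)(y), a ρ(y))`. For `a = e^ε` this lies in `[1 - δ, 1]` by the first DP
inequality; for `a = e^{-ε}` it equals `e^{-ε} (1 - Σ_y max(ρ(y) - e^ε R(x)(y), 0))`, which yields (ii)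
through `max(1 - e^ε min(π, e^ε), 0) = 1 - e^ε min(π, e^{-ε})` and the second DP inequality.
-/

open Finset MeasureTheory

theorem integral_ite_le_eq_min {w a : ℝ} (hw : 0 ≤ w) (ha : 0 ≤ a) :
    ∫ θ in (0 : ℝ)..a, (if θ ≤ w then (1 : ℝ) else 0) = min w a := by
  have hind : (fun θ : ℝ => if θ ≤ w then (1 : ℝ) else 0) = (Set.Iic w).indicator 1 := by
    ext θ; simp [Set.indicator_apply]
  rw [intervalIntegral.integral_of_le ha, hind, integral_indicator_one measurableSet_Iic,
    measureReal_restrict_apply measurableSet_Iic, Set.inter_comm, Set.Ioc_inter_Iic,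
    Real.volume_real_Ioc, sub_zero, min_comm, max_eq_left (le_min hw ha)]

theorem antitone_ite_le_one_zero (w : ℝ) :
    Antitone fun θ : ℝ => if θ ≤ w then (1 : ℝ) else 0 := fun a b hab => by
  by_cases hb : b ≤ w
  · simp [hb, hab.trans hb]
  · simp only [hb, if_false]; positivity

theorem antitone_card_le {ι : Type*} [Fintype ι] (W : ι → ℝ) :
    Antitone fun θ : ℝ => (#{s | θ ≤ W s} : ℝ) := fun _ _ hab =>
  Nat.cast_le.mpr (card_le_card (monotone_filter_right _ fun _ _ hs => hab.trans hs))

theorem sum_min_eq_integral_card_le {ι : Type*} [Fintype ι] {W : ι → ℝ} (hW : ∀ s, 0 ≤ W s)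
    {a : ℝ} (ha : 0 ≤ a) :
    ∑ s, min (W s) a = ∫ θ in (0 : ℝ)..a, (#{s | θ ≤ W s} : ℝ) := by
  simp_rw [natCast_card_filter]
  rw [intervalIntegral.integral_finsetSum fun s _ => (antitone_ite_le_one_zero _).intervalIntegrable]
  exact sum_congr rfl fun s _ => (integral_ite_le_eq_min (hW s) ha).symm

theorem abs_sub_sum_min_div_le {ι κ : Type*} [Fintype ι] [Fintype κ] {W₁ : ι → ℝ} {W₂ : κ → ℝ}
    (h₁ : ∀ s, 0 ≤ W₁ s) (h₂ : ∀ s, 0 ≤ W₂ s) {a β D₁ D₂ : ℝ} (ha : 0 ≤ a)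
    (hβ : ∀ θ ∈ Set.Icc 0 a, |(#{s | θ ≤ W₁ s} : ℝ) / D₁ - (#{s | θ ≤ W₂ s} : ℝ) / D₂| ≤ β) :
    |(∑ s, min (W₁ s) a) / D₁ - (∑ s, min (W₂ s) a) / D₂| ≤ a * β := by
  rw [sum_min_eq_integral_card_le h₁ ha, sum_min_eq_integral_card_le h₂ ha,
    ← intervalIntegral.integral_div, ← intervalIntegral.integral_div,
    ← intervalIntegral.integral_sub ((antitone_card_le W₁).intervalIntegrable.div_const D₁)
      ((antitone_card_le W₂).intervalIntegrable.div_const D₂), ← Real.norm_eq_abs]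
  calc _ ≤ β * |a - 0| := intervalIntegral.norm_integral_le_of_norm_le_const fun θ hθ => by
          rw [Set.uIoc_of_le ha] at hθ
          exact hβ θ (Set.Ioc_subset_Icc_self hθ)
    _ = a * β := by rw [sub_zero, abs_of_nonneg ha, mul_comm]

theorem sum_comp_div_eq_sum_card_div_mul {Ω Y : Type*} [Fintype Ω] [Fintype Y] [DecidableEq Y]
    (f : Ω → Y) (φ : Y → ℝ) (D : ℝ) :
    (∑ r, φ (f r)) / D = ∑ y, (#{r | f r = y} : ℝ) / D * φ y := by
  rw [← sum_fiberwise univ f, sum_div]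
  refine sum_congr rfl fun y _ => ?_
  rw [sum_congr rfl fun r hr => by rw [(mem_filter.mp hr).2], sum_const, nsmul_eq_mul]
  ring

theorem min_eq_sub_max_sub_zero (a b : ℝ) : min a b = a - max (a - b) 0 := by
  rw [← min_sub_sub_left, sub_sub_cancel, sub_zero, min_comm]

theorem mul_min_div_eq_min_mul {a b c : ℝ} (ha : 0 ≤ a) (hb : 0 ≤ b) :
    b * min (a / b) c = min a (c * b) := by
  rcases hb.eq_or_lt with rfl | hb
  · simp [ha]
  · rw [mul_min_of_nonneg _ _ hb.le, mul_div_cancel₀ _ hb.ne', mul_comm]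

theorem min_mul_div_eq_min_div {a b c : ℝ} (hb : 0 ≤ b) (hc : 0 ≤ c) :
    min a (c * b) / b = min (a / b) c := by
  rcases hb.eq_or_lt with rfl | hb
  · simp [hc]
  · rw [← min_div_div_right hb.le, mul_div_cancel_right₀ _ hb.ne']

theorem max_one_sub_mul_min_eq {c w : ℝ} (hc : 1 ≤ c) :
    max (1 - c * min w c) 0 = 1 - c * min w c⁻¹ := by
  have hc0 : 0 < c := by linarith
  have hcc : c * c⁻¹ = 1 := mul_inv_cancel₀ hc0.ne'
  have hcinv : c⁻¹ ≤ c := (inv_le_one_of_one_le₀ hc).trans hc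
  rcases le_total w c⁻¹ with hw | hw
  · rw [min_eq_left (hw.trans hcinv), min_eq_left hw, max_eq_left]
    nlinarith [mul_le_mul_of_nonneg_left hw hc0.le]
  · rw [min_eq_right hw, hcc, sub_self, max_eq_right]
    nlinarith [mul_le_mul_of_nonneg_left (le_min hw hcinv) hc0.le]

section Sampling

variable {Y : Type*} [Fintype Y] [DecidableEq Y] {t ℓ : ℕ} {R₀ : (Fin t → Bool) → Y}
  {S : (Fin ℓ → Bool) → Y} {μ ρ : Y → ℝ} {c β : ℝ}

theorem abs_sum_min_ratio_div_sub_le (hμ : ∀ y, 0 ≤ μ y) (hρ : ∀ y, 0 ≤ ρ y)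
    (hsamp : ∀ y, (#{r | R₀ r = y} : ℝ) / 2 ^ t = ρ y)
    (hfool : ∀ θ ∈ Set.Icc 0 c, |(#{s | θ ≤ μ (S s) / ρ (S s)} : ℝ) / 2 ^ ℓ -
      (#{r | θ ≤ μ (R₀ r) / ρ (R₀ r)} : ℝ) / 2 ^ t| ≤ β)
    {a : ℝ} (ha : 0 ≤ a) (hac : a ≤ c) :
    |(∑ s, min (μ (S s) / ρ (S s)) a) / 2 ^ ℓ - ∑ y, min (μ y) (a * ρ y)| ≤ a * β := by
  have hratio : ∀ y, 0 ≤ μ y / ρ y := fun y => div_nonneg (hμ y) (hρ y)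
  have href : (∑ r, min (μ (R₀ r) / ρ (R₀ r)) a) / 2 ^ t = ∑ y, min (μ y) (a * ρ y) := by
    rw [sum_comp_div_eq_sum_card_div_mul R₀ (fun y => min (μ y / ρ y) a)]
    simp_rw [hsamp]
    exact sum_congr rfl fun y _ => mul_min_div_eq_min_mul (hμ y) (hρ y)
  rw [← href]
  exact abs_sub_sum_min_div_le (fun s => hratio _) (fun r => hratio _) ha
    fun θ hθ => hfool θ ⟨hθ.1, hθ.2.trans hac⟩

theorem sum_min_ratio_div_mem_Icc (hμ : ∀ y, 0 ≤ μ y) (hμ1 : ∑ y, μ y = 1) (hρ : ∀ y, 0 ≤ ρ y)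
    {δ : ℝ} (hc : 0 ≤ c) (hδ : ∑ y, max (μ y - c * ρ y) 0 ≤ δ)
    (hsamp : ∀ y, (#{r | R₀ r = y} : ℝ) / 2 ^ t = ρ y)
    (hfool : ∀ θ ∈ Set.Icc 0 c, |(#{s | θ ≤ μ (S s) / ρ (S s)} : ℝ) / 2 ^ ℓ -
      (#{r | θ ≤ μ (R₀ r) / ρ (R₀ r)} : ℝ) / 2 ^ t| ≤ β) :
    (∑ s, min (μ (S s) / ρ (S s)) c) / 2 ^ ℓ ∈ Set.Icc (1 - δ - c * β) (1 + c * β) := by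
  have hcmp := abs_le.mp (abs_sum_min_ratio_div_sub_le hμ hρ hsamp hfool hc le_rfl)
  have hle : ∑ y, min (μ y) (c * ρ y) ≤ 1 := hμ1 ▸ sum_le_sum fun y _ => min_le_left _ _
  have hge : 1 - δ ≤ ∑ y, min (μ y) (c * ρ y) := by
    simp_rw [min_eq_sub_max_sub_zero (μ _)]
    rw [sum_sub_distrib, hμ1]
    linarith
  constructor <;> linarith [hcmp.1, hcmp.2]

theorem sum_max_one_sub_mul_min_ratio_div_le (hμ : ∀ y, 0 ≤ μ y) (hρ : ∀ y, 0 ≤ ρ y)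
    (hρ1 : ∑ y, ρ y = 1) {δ : ℝ} (hc : 1 ≤ c) (hδ : ∑ y, max (ρ y - c * μ y) 0 ≤ δ)
    (hsamp : ∀ y, (#{r | R₀ r = y} : ℝ) / 2 ^ t = ρ y)
    (hfool : ∀ θ ∈ Set.Icc 0 c, |(#{s | θ ≤ μ (S s) / ρ (S s)} : ℝ) / 2 ^ ℓ -
      (#{r | θ ≤ μ (R₀ r) / ρ (R₀ r)} : ℝ) / 2 ^ t| ≤ β) :
    (∑ s, max (1 - c * min (μ (S s) / ρ (S s)) c) 0) / 2 ^ ℓ ≤ δ + β := by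
  have hc0 : 0 < c := by linarith
  have hcc : c * c⁻¹ = 1 := mul_inv_cancel₀ hc0.ne'
  have hcmp := abs_le.mp (abs_sum_min_ratio_div_sub_le hμ hρ hsamp hfool (inv_nonneg.mpr hc0.le)
    ((inv_le_one_of_one_le₀ hc).trans hc))
  have hseed : (∑ s, max (1 - c * min (μ (S s) / ρ (S s)) c) 0) / 2 ^ ℓ =
      1 - c * ((∑ s, min (μ (S s) / ρ (S s)) c⁻¹) / 2 ^ ℓ) := by
    simp_rw [max_one_sub_mul_min_eq hc]
    rw [sum_sub_distrib, ← mul_sum, sum_const, card_univ, Fintype.card_fun, Fintype.card_bool,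
      Fintype.card_fin, nsmul_eq_mul, mul_one, Nat.cast_pow, Nat.cast_ofNat]
    field_simp
  have href : c * ∑ y, min (μ y) (c⁻¹ * ρ y) = 1 - ∑ y, max (ρ y - c * μ y) 0 := by
    rw [mul_sum, ← hρ1, ← sum_sub_distrib]
    refine sum_congr rfl fun y _ => ?_
    rw [mul_min_of_nonneg _ _ hc0.le, ← mul_assoc, hcc, one_mul, min_comm,
      min_eq_sub_max_sub_zero]
  have hscaled := mul_le_mul_of_nonneg_left hcmp.1 hc0.le
  rw [mul_neg, ← mul_assoc, hcc, one_mul, mul_sub] at hscaled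
  rw [hseed]
  linarith

end Sampling

theorem stmt_6_general {X Y : Type*} [Fintype Y] [DecidableEq Y]
    (R : X → Y → ℝ) (ρ : Y → ℝ) (ε δ β : ℝ) (t ℓ : ℕ)
    (R₀ : (Fin t → Bool) → Y) (G : (Fin ℓ → Bool) → Fin t → Bool)
    (hRpmf : ∀ x, (∀ y, 0 ≤ R x y) ∧ ∑ y, R x y = 1)
    (hρpmf : (∀ y, 0 ≤ ρ y) ∧ ∑ y, ρ y = 1)
    (hε : 0 ≤ ε)
    (hDP : ∀ x, (∑ y, max (R x y - Real.exp ε * ρ y) 0 ≤ δ) ∧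
      (∑ y, max (ρ y - Real.exp ε * R x y) 0 ≤ δ))
    (hsamp : ∀ y, ((univ.filter fun r : Fin t → Bool => R₀ r = y).card : ℝ) / 2 ^ t = ρ y)
    (hfool : ∀ x : X, ∀ θ ∈ Set.Icc (0 : ℝ) (Real.exp ε),
      |((univ.filter fun s : Fin ℓ → Bool =>
            θ ≤ R x (R₀ (G s)) / ρ (R₀ (G s))).card : ℝ) / 2 ^ ℓ -
        ((univ.filter fun r : Fin t → Bool =>
            θ ≤ R x (R₀ r) / ρ (R₀ r)).card : ℝ) / 2 ^ t| ≤ β) :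
    ∀ x : X,
      (1 - δ - Real.exp ε * β ≤
        (∑ s : Fin ℓ → Bool,
          min (R x (R₀ (G s))) (Real.exp ε * ρ (R₀ (G s))) / ρ (R₀ (G s))) / 2 ^ ℓ ∧
      (∑ s : Fin ℓ → Bool,
          min (R x (R₀ (G s))) (Real.exp ε * ρ (R₀ (G s))) / ρ (R₀ (G s))) / 2 ^ ℓ ≤
        1 + Real.exp ε * β) ∧
      (∑ s : Fin ℓ → Bool,
          max (1 - Real.exp ε *
            (min (R x (R₀ (G s))) (Real.exp ε * ρ (R₀ (G s))) / ρ (R₀ (G s)))) 0) / 2 ^ ℓ ≤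
        δ + β := by
  intro x
  obtain ⟨hR, hR1⟩ := hRpmf x
  have htrunc : ∀ y, min (R x y) (Real.exp ε * ρ y) / ρ y = min (R x y / ρ y) (Real.exp ε) :=
    fun y => min_mul_div_eq_min_div (hρpmf.1 y) (Real.exp_pos ε).le
  simp only [htrunc]
  exact ⟨sum_min_ratio_div_mem_Icc (S := fun s => R₀ (G s)) hR hR1 hρpmf.1 (Real.exp_pos ε).le
      (hDP x).1 hsamp (hfool x),
    sum_max_one_sub_mul_min_ratio_div_le (S := fun s => R₀ (G s)) hR hρpmf.1 hρpmf.2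
      (Real.one_le_exp hε) (hDP x).2 hsamp (hfool x)⟩

/-- **Pseudorandom seeds approximately preserve the truncated density ratio of an
(ε,δ)-DP randomizer.** With `π̃_x(y) = min(R(x)(y), e^ε ρ(y))/ρ(y)`:
(i) `1 − δ − e^ε β ≤ E_{s}[π̃_x(R₀(G s))] ≤ 1 + e^ε β`, and
(ii) `E_{s}[max(1 − e^ε π̃_x(R₀(G s)), 0)] ≤ δ + β`. -/
theorem stmt_6 {X Y : Type*} [Fintype X] [Fintype Y] [Nonempty X] [Nonempty Y] [DecidableEq Y]
    (R : X → Y → ℝ) (ρ : Y → ℝ) (ε δ β : ℝ) (t ℓ : ℕ)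
    (R₀ : (Fin t → Bool) → Y) (G : (Fin ℓ → Bool) → Fin t → Bool)
    (hRpmf : ∀ x, (∀ y, 0 ≤ R x y) ∧ ∑ y, R x y = 1)
    (hρpmf : (∀ y, 0 ≤ ρ y) ∧ ∑ y, ρ y = 1)
    (hε : 0 ≤ ε) (hδ : 0 ≤ δ) (hβ0 : 0 ≤ β)
    (hDP : ∀ x, (∑ y, max (R x y - Real.exp ε * ρ y) 0 ≤ δ) ∧
      (∑ y, max (ρ y - Real.exp ε * R x y) 0 ≤ δ))
    (hsamp : ∀ y, ((univ.filter fun r : Fin t → Bool => R₀ r = y).card : ℝ) / 2 ^ t = ρ y)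
    (hfool : ∀ x : X, ∀ θ ∈ Set.Icc (0 : ℝ) (Real.exp ε),
      |((univ.filter fun s : Fin ℓ → Bool =>
            θ ≤ R x (R₀ (G s)) / ρ (R₀ (G s))).card : ℝ) / 2 ^ ℓ -
        ((univ.filter fun r : Fin t → Bool =>
            θ ≤ R x (R₀ r) / ρ (R₀ r)).card : ℝ) / 2 ^ t| ≤ β) :
    ∀ x : X,
      (1 - δ - Real.exp ε * β ≤
        (∑ s : Fin ℓ → Bool,
          min (R x (R₀ (G s))) (Real.exp ε * ρ (R₀ (G s))) / ρ (R₀ (G s))) / 2 ^ ℓ ∧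
      (∑ s : Fin ℓ → Bool,
          min (R x (R₀ (G s))) (Real.exp ε * ρ (R₀ (G s))) / ρ (R₀ (G s))) / 2 ^ ℓ ≤
        1 + Real.exp ε * β) ∧
      (∑ s : Fin ℓ → Bool,
          max (1 - Real.exp ε *
            (min (R x (R₀ (G s))) (Real.exp ε * ρ (R₀ (G s))) / ρ (R₀ (G s)))) 0) / 2 ^ ℓ ≤
        δ + β :=
  stmt_6_general R ρ ε δ β t ℓ R₀ G hRpmf hρpmf hε hDP hsamp hfool
end

section
/- Let p be a prime and m ∈ ℕ with 0 < m < p/2, and consider the symmetric PI-RAPPOR randomizer with α₀ := m/p and α₁ := 1 − α₀, so that e^ε := (p − m)/m = (1 − α₀)/α₀. Let x₁, …, x_n be nonzero elements of ZMod p, c_j := #{i : x_i = j}, and let φ¹, …, φⁿ be independent with φ^i ~ M_{x_i}, with c̃_j := Σ_i (bool(φ^i₀ + j·φ^i₁) − α₀)/(α₁ − α₀). Then for every nonzero j ∈ ZMod p, E[c̃_j] = c_j and Var[c̃_j] = n·e^ε/(e^ε − 1)²; moreover, for any set J of nonzero elements of ZMod p with |J| = k, E[Σ_{j ∈ J} (c̃_j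 − c_j)²] = n·k·e^ε/(e^ε − 1)². -/
/-!
The joint law of `(φ¹, …, φⁿ)` is the product of the PMFs `M_{x_i}`, so `c̃_j` is a sum of
independent terms `(bool(φ^i₀ + j φ^i₁) − α₀)/(α₁ − α₀)`. Under `M_q` the bit
`bool(φ₀ + j φ₁)` has mean `α₁` if `j = q` and `α₀` otherwise: for `j ≠ q` the map
`φ ↦ (φ₀ + j φ₁, φ₀ + q φ₁)` is a bijection of `(ZMod p)²`, so the bit of `j` equals 1 on
`m²` of the `m p` points where the bit of `q` is 1, giving mean `α₁ m/p + (1 − α₁) m/p`. Hence the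
`i`-th term has mean `[x_i = j]` and, being an affine image of a Bernoulli bit, variance
`α₀(1 − α₀)/(1 − 2α₀)² = e^ε/(e^ε − 1)²` in the symmetric case; the variances add.
-/

open Finset MeasureTheory ProbabilityTheory

theorem card_filter_val_lt {p m : ℕ} [NeZero p] (hmp : m ≤ p) :
    #{u : ZMod p | u.val < m} = m := by
  conv_rhs => rw [← card_range m]
  refine card_nbij' ZMod.val Nat.cast (fun u hu => by simpa using hu) (fun t ht => ?_)
    (fun u _ => ZMod.natCast_zmod_val u) (fun t ht => ZMod.val_cast_of_lt ?_)
  · simp only [coe_range, Set.mem_Iio] at ht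
    simpa [ZMod.val_cast_of_lt (ht.trans_le hmp)] using ht
  · simp only [coe_range, Set.mem_Iio] at ht
    exact ht.trans_le hmp

theorem card_filter_add_mul {R : Type*} [Ring R] [Fintype R] (P : R → Prop) [DecidablePred P]
    (j : R) : #{s : R × R | P (s.1 + j * s.2)} = #{u | P u} * Fintype.card R := by
  rw [← card_univ, ← card_product]
  refine card_nbij' (fun s => (s.1 + j * s.2, s.2)) (fun t => (t.1 - j * t.2, t.2))
    (fun s hs => by simpa using hs) (fun t ht => by simpa using ht)
    (fun s _ => by simp) (fun t _ => by simp)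

theorem card_filter_add_mul_and {F : Type*} [Field F] [Fintype F] (P Q : F → Prop)
    [DecidablePred P] [DecidablePred Q] {j q : F} (hjq : j ≠ q) :
    #{s : F × F | P (s.1 + j * s.2) ∧ Q (s.1 + q * s.2)} = #{u | P u} * #{u | Q u} := by
  have hd : j - q ≠ 0 := sub_ne_zero.mpr hjq
  rw [← card_product]
  refine card_nbij' (fun s => (s.1 + j * s.2, s.1 + q * s.2))
    (fun t => (t.1 - j * ((t.1 - t.2) / (j - q)), (t.1 - t.2) / (j - q)))
    (fun s hs => by simpa using hs) (fun t ht => ?_) (fun s _ => ?_) (fun t _ => ?_)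
  · have h1 : t.1 - j * ((t.1 - t.2) / (j - q)) + j * ((t.1 - t.2) / (j - q)) = t.1 := by ring
    have h2 : t.1 - j * ((t.1 - t.2) / (j - q)) + q * ((t.1 - t.2) / (j - q)) = t.2 := by
      field_simp; ring
    simpa [h1, h2] using ht
  · ext <;> field_simp <;> ring
  · ext <;> field_simp <;> ring

theorem variance_eq_mul_one_sub_of_sq_eq_self {Ω : Type*} [MeasurableSpace Ω] {μ : Measure Ω}
    [IsProbabilityMeasure μ] {X : Ω → ℝ} (hX : MemLp X 2 μ) (hsq : ∀ ω, X ω ^ 2 = X ω) :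
    Var[X; μ] = μ[X] * (1 - μ[X]) := by
  rw [variance_eq_sub hX, show X ^ 2 = X from funext hsq]
  ring

theorem mul_one_sub_div_sq_eq {a : ℝ} (ha : a ≠ 0) :
    a * (1 - a) / (1 - a - a) ^ 2 = (1 - a) / a / ((1 - a) / a - 1) ^ 2 := by
  rw [show (1 - a) / a - 1 = (1 - a - a) / a by field_simp, div_pow, div_div_div_eq, sq a,
    ← mul_assoc, mul_comm a ((1 - a - a) ^ 2), mul_div_mul_right _ _ ha, mul_comm]

section Pi

variable {ι α : Type*} [Fintype ι] [MeasurableSpace α]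

theorem integral_sum_comp_eval_pi {μ : ι → Measure α} [∀ i, IsProbabilityMeasure (μ i)]
    {g : ι → α → ℝ} (hg : ∀ i, Integrable (g i) (μ i)) :
    ∫ f, ∑ i, g i (f i) ∂Measure.pi μ = ∑ i, ∫ a, g i a ∂μ i := by
  refine (integral_finsetSum univ fun i _ =>
    (measurePreserving_eval μ i).integrable_comp_of_integrable (hg i)).trans
    (sum_congr rfl fun i _ => ?_)
  have hmap := (measurePreserving_eval μ i).map_eq
  exact (integral_map (measurable_pi_apply i).aemeasurable
    (hmap ▸ (hg i).aestronglyMeasurable)).symm.trans (by rw [hmap])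

theorem map_eq_pi_of_measure_eq_prod [Countable α] [MeasurableSingletonClass α]
    {Ω : Type*} [MeasurableSpace Ω] {P : Measure Ω} {φ : ι → Ω → α} (hφ : ∀ i, Measurable (φ i))
    {μ : ι → Measure α} [∀ i, SigmaFinite (μ i)]
    (h : ∀ f : ι → α, P {ω | ∀ i, φ i ω = f i} = ∏ i, μ i {f i}) :
    P.map (fun ω i => φ i ω) = Measure.pi μ := by
  refine Measure.ext_iff_singleton.mpr fun f => ?_
  rw [Measure.map_apply (measurable_pi_lambda _ hφ) (measurableSet_singleton f),
    Measure.pi_singleton, ← h f]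
  congr 1
  ext ω
  simp [funext_iff]

end Pi

section Rappor

variable {p : ℕ} {m : ℕ} {α₁ : ℝ}

def rapporBit (m : ℕ) (j : ZMod p) (s : ZMod p × ZMod p) : ℝ :=
  if (s.1 + j * s.2).val < m then 1 else 0

noncomputable def rapporWeight (p m : ℕ) (α₁ : ℝ) (j : ZMod p) (s : ZMod p × ZMod p) : ℝ :=
  if (s.1 + j * s.2).val < m then α₁ / (m * p) else (1 - α₁) / ((p - m) * p)

noncomputable def rapporEstimate (p m : ℕ) (α₁ : ℝ) (j : ZMod p) (s : ZMod p × ZMod p) : ℝ :=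
  (rapporBit m j s - m / p) / (α₁ - m / p)

theorem rapporBit_sq (j : ZMod p) (s : ZMod p × ZMod p) :
    rapporBit m j s ^ 2 = rapporBit m j s := by
  unfold rapporBit; split_ifs <;> norm_num

theorem rapporWeight_eq (j : ZMod p) (s : ZMod p × ZMod p) :
    rapporWeight p m α₁ j s = (α₁ / (m * p) - (1 - α₁) / ((p - m) * p)) * rapporBit m j s
      + (1 - α₁) / ((p - m) * p) := by
  unfold rapporWeight rapporBit; split_ifs <;> ring

theorem sum_rapporBit [NeZero p] (hmp : m ≤ p) (j : ZMod p) : ∑ s, rapporBit m j s = m * p := by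
  classical
  simp only [rapporBit, sum_boole]
  rw [card_filter_add_mul (fun u : ZMod p => u.val < m), card_filter_val_lt hmp, ZMod.card]
  push_cast; rfl

theorem sum_rapporBit_mul_rapporBit [Fact p.Prime] (hmp : m ≤ p) {j q : ZMod p} (hjq : j ≠ q) :
    ∑ s, rapporBit m j s * rapporBit m q s = m * m := by
  classical
  simp only [rapporBit, mul_ite, mul_one, mul_zero, ← ite_and, sum_boole]
  rw [card_filter_add_mul_and (fun u : ZMod p => u.val < m) (fun u : ZMod p => u.val < m) hjq.symm,
    card_filter_val_lt hmp]
  push_cast; rfl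

theorem sum_rapporWeight [NeZero p] (hm0 : 0 < m) (hmp : m < p) (q : ZMod p) :
    ∑ s, rapporWeight p m α₁ q s = 1 := by
  have hm : (m : ℝ) ≠ 0 := by positivity
  have hpm : (p : ℝ) - m ≠ 0 := sub_ne_zero.mpr (by exact_mod_cast hmp.ne')
  have hp : (p : ℝ) ≠ 0 := by exact_mod_cast NeZero.ne p
  simp only [rapporWeight_eq, sum_add_distrib, ← mul_sum, sum_rapporBit hmp.le, sum_const,
    card_univ, Fintype.card_prod, ZMod.card, nsmul_eq_mul]
  field_simp
  push_cast
  ring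

theorem sum_rapporWeight_mul_rapporBit [Fact p.Prime] (hm0 : 0 < m) (hmp : m < p) (q j : ZMod p) :
    ∑ s, rapporWeight p m α₁ q s * rapporBit m j s = if j = q then α₁ else m / p := by
  have hm : (m : ℝ) ≠ 0 := by positivity
  have hpm : (p : ℝ) - m ≠ 0 := sub_ne_zero.mpr (by exact_mod_cast hmp.ne')
  have hp : (p : ℝ) ≠ 0 := by exact_mod_cast (Fact.out : p.Prime).ne_zero
  simp only [rapporWeight_eq, add_mul, mul_assoc, sum_add_distrib, ← mul_sum]
  split_ifs with hjq
  · subst hjq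
    simp only [← sq, rapporBit_sq, sum_rapporBit hmp.le]
    field_simp
    ring
  · rw [sum_rapporBit_mul_rapporBit hmp.le (Ne.symm hjq), sum_rapporBit hmp.le]
    field_simp
    ring

theorem rapporWeight_nonneg (hmp : m < p) (h0 : 0 ≤ α₁) (h1 : α₁ ≤ 1) (j : ZMod p)
    (s : ZMod p × ZMod p) : 0 ≤ rapporWeight p m α₁ j s := by
  have : (m : ℝ) < p := by exact_mod_cast hmp
  unfold rapporWeight
  split_ifs
  · positivity
  · exact div_nonneg (by linarith) (mul_nonneg (by linarith) (by positivity))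

section Measure

variable [NeZero p] (hm0 : 0 < m) (hmp : m < p) (h0 : 0 ≤ α₁) (h1 : α₁ ≤ 1)
  [MeasurableSpace (ZMod p × ZMod p)] [MeasurableSingletonClass (ZMod p × ZMod p)]

noncomputable def rapporPMF (j : ZMod p) : PMF (ZMod p × ZMod p) :=
  PMF.ofFintype (fun s => ENNReal.ofReal (rapporWeight p m α₁ j s)) <| by
    rw [← ENNReal.ofReal_sum_of_nonneg fun s _ => rapporWeight_nonneg hmp h0 h1 j s,
      sum_rapporWeight hm0 hmp, ENNReal.ofReal_one]

theorem integral_rapporPMF (j : ZMod p) (g : ZMod p × ZMod p → ℝ) :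
    ∫ s, g s ∂(rapporPMF hm0 hmp h0 h1 j).toMeasure = ∑ s, rapporWeight p m α₁ j s * g s := by
  simp only [PMF.integral_eq_sum, rapporPMF, PMF.ofFintype_apply, smul_eq_mul,
    ENNReal.toReal_ofReal (rapporWeight_nonneg hmp h0 h1 j _)]

theorem integral_rapporEstimate [Fact p.Prime] (hα₁ : α₁ ≠ m / p) (q j : ZMod p) :
    ∫ s, rapporEstimate p m α₁ j s ∂(rapporPMF hm0 hmp h0 h1 q).toMeasure =
      if q = j then 1 else 0 := by
  have hd : α₁ - m / p ≠ 0 := sub_ne_zero.mpr hα₁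
  simp only [integral_rapporPMF, rapporEstimate, mul_div_assoc', mul_sub, ← sum_div,
    sum_sub_distrib, ← sum_mul, sum_rapporWeight_mul_rapporBit hm0 hmp, sum_rapporWeight hm0 hmp,
    eq_comm (a := q)]
  split_ifs
  · rw [one_mul, div_self hd]
  · simp

theorem variance_rapporEstimate [Fact p.Prime] (q j : ZMod p) :
    Var[rapporEstimate p m α₁ j; (rapporPMF hm0 hmp h0 h1 q).toMeasure] =
      (if j = q then α₁ * (1 - α₁) else m / p * (1 - m / p)) / (α₁ - m / p) ^ 2 := by
  have hbit : Var[rapporBit m j; (rapporPMF hm0 hmp h0 h1 q).toMeasure] =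
      if j = q then α₁ * (1 - α₁) else m / p * (1 - m / p) := by
    rw [variance_eq_mul_one_sub_of_sq_eq_self MemLp.of_discrete (rapporBit_sq j),
      integral_rapporPMF, sum_rapporWeight_mul_rapporBit hm0 hmp]
    split_ifs <;> rfl
  have hest : rapporEstimate p m α₁ j = fun s => (rapporBit m j s - m / p) * (α₁ - m / p)⁻¹ :=
    funext fun s => div_eq_mul_inv _ _
  rw [hest, variance_mul_const, variance_sub_const .of_discrete, hbit, div_eq_mul_inv _ (_ ^ 2),
    inv_pow]

variable {ι : Type*} [Fintype ι] (x : ι → ZMod p)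

theorem map_eq_pi_rapporPMF {Ω : Type*} [MeasurableSpace Ω] {P : Measure Ω} [IsFiniteMeasure P]
    {φ : ι → Ω → ZMod p × ZMod p} (hφ : ∀ i, Measurable (φ i))
    (hjoint : ∀ f : ι → ZMod p × ZMod p,
      (P {ω | ∀ i, φ i ω = f i}).toReal = ∏ i, rapporWeight p m α₁ (x i) (f i)) :
    P.map (fun ω i => φ i ω) = Measure.pi fun i => (rapporPMF hm0 hmp h0 h1 (x i)).toMeasure := by
  refine map_eq_pi_of_measure_eq_prod hφ fun f => ?_
  rw [← ENNReal.ofReal_toReal (measure_ne_top P _), hjoint,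
    ENNReal.ofReal_prod_of_nonneg fun i _ => rapporWeight_nonneg hmp h0 h1 _ _]
  simp only [PMF.toMeasure_apply_singleton _ _ (measurableSet_singleton _), rapporPMF,
    PMF.ofFintype_apply]

variable [Fact p.Prime]

theorem integral_sum_rapporEstimate (hα₁ : α₁ ≠ m / p) (j : ZMod p) :
    ∫ f, ∑ i, rapporEstimate p m α₁ j (f i)
        ∂Measure.pi (fun i => (rapporPMF hm0 hmp h0 h1 (x i)).toMeasure) = #{i | x i = j} := by
  rw [integral_sum_comp_eval_pi fun i => Integrable.of_finite]
  simp only [integral_rapporEstimate hm0 hmp h0 h1 hα₁, sum_boole]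

theorem integral_sum_rapporEstimate_sub_sq (hα₁ : α₁ ≠ m / p) (j : ZMod p) :
    ∫ f, (∑ i, rapporEstimate p m α₁ j (f i) - #{i | x i = j}) ^ 2
        ∂Measure.pi (fun i => (rapporPMF hm0 hmp h0 h1 (x i)).toMeasure) =
      ∑ i, (if j = x i then α₁ * (1 - α₁) else m / p * (1 - m / p)) / (α₁ - m / p) ^ 2 := by
  rw [← integral_sum_rapporEstimate hm0 hmp h0 h1 x hα₁ j,
    ← variance_eq_integral Measurable.of_discrete.aemeasurable]
  simp only [← variance_rapporEstimate hm0 hmp h0 h1]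
  rw [← variance_sum_pi fun i => MemLp.of_discrete]
  congr 1
  ext f
  simp

end Measure

end Rappor

theorem stmt_16_general (p : ℕ) [Fact p.Prime] (m : ℕ) (hm0 : 0 < m) (hmp : 2 * m < p)
    (α₀ α₁ : ℝ) (hα₀ : α₀ = (m : ℝ) / p) (hα₁ : α₁ = 1 - α₀)
    (eε : ℝ) (heε : eε = ((p : ℝ) - m) / m)
    (M : ZMod p → ZMod p × ZMod p → ℝ)
    (hM : ∀ j φ, M j φ =
      if (φ.1 + j * φ.2).val < m then α₁ / (m * p) else (1 - α₁) / ((p - m) * p))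
    (n : ℕ) (x : Fin n → ZMod p)
    {Ω : Type*} [MeasurableSpace Ω] (P : Measure Ω) [IsProbabilityMeasure P]
    [MeasurableSpace (ZMod p × ZMod p)] [MeasurableSingletonClass (ZMod p × ZMod p)]
    (φ : Fin n → Ω → ZMod p × ZMod p) (hmeas : ∀ i, Measurable (φ i))
    (hjoint : ∀ f : Fin n → ZMod p × ZMod p,
      (P {ω | ∀ i, φ i ω = f i}).toReal = ∏ i, M (x i) (f i))
    (c : ZMod p → ℕ) (hc : ∀ j, c j = (univ.filter fun i => x i = j).card)
    (ctil : ZMod p → Ω → ℝ)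
    (hctil : ∀ j ω, ctil j ω =
      ∑ i, ((if ((φ i ω).1 + j * (φ i ω).2).val < m then (1 : ℝ) else 0) - α₀) / (α₁ - α₀)) :
    (∀ j : ZMod p, j ≠ 0 →
      (∫ ω, ctil j ω ∂P) = c j ∧
      (∫ ω, (ctil j ω - c j) ^ 2 ∂P) = n * eε / (eε - 1) ^ 2) ∧
    (∀ (J : Finset (ZMod p)) (k : ℕ), (0 : ZMod p) ∉ J → J.card = k →
      (∫ ω, ∑ j ∈ J, (ctil j ω - c j) ^ 2 ∂P) = n * k * eε / (eε - 1) ^ 2) := by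
  subst hα₀ hα₁ heε
  obtain rfl : M = rapporWeight p m (1 - m / p) := funext₂ hM
  have hmp' : m < p := by omega
  have hm : (0 : ℝ) < m := by exact_mod_cast hm0
  have h2m : 2 * (m : ℝ) < p := by exact_mod_cast hmp
  have hhalf : (m : ℝ) / p < 1 / 2 := by rw [div_lt_iff₀ (by linarith)]; linarith
  have h0 : 0 ≤ 1 - (m : ℝ) / p := by linarith
  have h1 : 1 - (m : ℝ) / p ≤ 1 := by simp only [sub_le_self_iff]; positivity
  have hsym : 1 - (m : ℝ) / p ≠ m / p := by intro h; linarith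
  set μ := Measure.pi fun i => (rapporPMF hm0 hmp' h0 h1 (x i)).toMeasure
  have hcomp (g : (Fin n → ZMod p × ZMod p) → ℝ) : ∫ ω, g (φ · ω) ∂P = ∫ f, g f ∂μ := by
    rw [← integral_map (measurable_pi_lambda _ hmeas).aemeasurable .of_discrete,
      map_eq_pi_rapporPMF hm0 hmp' h0 h1 x hmeas hjoint]
  have hest (j : ZMod p) (ω : Ω) : ctil j ω = ∑ i, rapporEstimate p m (1 - m / p) j (φ i ω) :=
    hctil j ω
  have hvar (j : ZMod p) : ∫ f, (∑ i, rapporEstimate p m (1 - m / p) j (f i) - #{i | x i = j}) ^ 2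
      ∂μ = n * ((p - m) / m) / ((p - m) / m - 1) ^ 2 := by
    have heε : ((p : ℝ) - m) / m = (1 - m / p) / (m / p) := by
      have hp : (p : ℝ) ≠ 0 := by linarith
      field_simp
    have hbern : (1 - (m : ℝ) / p) * (1 - (1 - m / p)) = m / p * (1 - m / p) := by ring
    rw [integral_sum_rapporEstimate_sub_sq hm0 hmp' h0 h1 x hsym, heε, mul_div_assoc,
      ← mul_one_sub_div_sq_eq (div_pos hm (by linarith)).ne']
    simp only [hbern, ite_self, sum_const, card_univ, Fintype.card_fin, nsmul_eq_mul]
  simp only [hest, hc]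
  refine ⟨fun j _ => ⟨?_, ?_⟩, fun J k _ hk => ?_⟩
  · rw [hcomp fun f => ∑ i, rapporEstimate p m (1 - m / p) j (f i),
      integral_sum_rapporEstimate hm0 hmp' h0 h1 x hsym]
  · rw [← hvar j, hcomp fun f => (∑ i, rapporEstimate p m (1 - m / p) j (f i) - #{i | x i = j}) ^ 2]
  · rw [hcomp fun f => ∑ j ∈ J, (∑ i, rapporEstimate p m (1 - m / p) j (f i) - #{i | x i = j}) ^ 2,
      integral_finsetSum J fun _ _ => .of_finite, sum_congr rfl fun j _ => hvar j, sum_const, hk,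
      nsmul_eq_mul]
    ring

/-- **Utility of symmetric PI-RAPPOR.**
With `α₀ = m/p`, `α₁ = 1 − α₀` and `e^ε = (p − m)/m`, the estimator `c̃_j` is unbiased
with `Var[c̃_j] = n·e^ε/(e^ε − 1)²` for every nonzero `j`; moreover for any set `J` of
nonzero elements with `|J| = k`, `E[∑_{j ∈ J} (c̃_j − c_j)²] = n·k·e^ε/(e^ε − 1)²`. -/
theorem stmt_16 (p : ℕ) [Fact p.Prime] (m : ℕ) (hm0 : 0 < m) (hmp : 2 * m < p)
    (α₀ α₁ : ℝ) (hα₀ : α₀ = (m : ℝ) / p) (hα₁ : α₁ = 1 - α₀)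
    (eε : ℝ) (heε : eε = ((p : ℝ) - m) / m)
    (M : ZMod p → ZMod p × ZMod p → ℝ)
    (hM : ∀ j φ, M j φ =
      if (φ.1 + j * φ.2).val < m then α₁ / (m * p) else (1 - α₁) / ((p - m) * p))
    (n : ℕ) (x : Fin n → ZMod p) (hx : ∀ i, x i ≠ 0)
    {Ω : Type*} [MeasurableSpace Ω] (P : Measure Ω) [IsProbabilityMeasure P]
    [MeasurableSpace (ZMod p × ZMod p)] [MeasurableSingletonClass (ZMod p × ZMod p)]
    (φ : Fin n → Ω → ZMod p × ZMod p) (hmeas : ∀ i, Measurable (φ i))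
    (hjoint : ∀ f : Fin n → ZMod p × ZMod p,
      (P {ω | ∀ i, φ i ω = f i}).toReal = ∏ i, M (x i) (f i))
    (c : ZMod p → ℕ) (hc : ∀ j, c j = (univ.filter fun i => x i = j).card)
    (ctil : ZMod p → Ω → ℝ)
    (hctil : ∀ j ω, ctil j ω =
      ∑ i, ((if ((φ i ω).1 + j * (φ i ω).2).val < m then (1 : ℝ) else 0) - α₀) / (α₁ - α₀)) :
    (∀ j : ZMod p, j ≠ 0 →
      (∫ ω, ctil j ω ∂P) = c j ∧
      (∫ ω, (ctil j ω - c j) ^ 2 ∂P) = n * eε / (eε - 1) ^ 2) ∧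
    (∀ (J : Finset (ZMod p)) (k : ℕ), (0 : ZMod p) ∉ J → J.card = k →
      (∫ ω, ∑ j ∈ J, (ctil j ω - c j) ^ 2 ∂P) = n * k * eε / (eε - 1) ^ 2) :=
  stmt_16_general p m hm0 hmp α₀ α₁ hα₀ hα₁ eε heε M hM n x P φ hmeas hjoint c hc ctil hctil
end
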